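/- arXiv:1612.01295 — 3 statements merged into one kernel-verified Lean document; each statement's English description precedes it below -/
import Mathlib

section
/- For any finite graph G and any 2-lift H of G, the number of matchings of size k in H is at most the number of matchings of size k in G × K₂, i.e., m_k(H) ≤ m_k(G × K₂). -/
open scoped Classical

/-- A 2-lift of `G` determined by a symmetric sign function `s` on pairs of vertices:
`s u v = false` means the edge `(u,v)` lifts to the parallel pair, `true` to the crossing pair. -/
def twoLift {V : Type} (G : SimpleGraph V) (s : V → V → Bool)
    (hs : ∀ u v, s u v = s v u) : SimpleGraph (V × Bool) where
  Adj a b := G.Adj a.1 b.1 ∧ xor a.2 b.2 = s a.1 b.1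
  symm := by
    constructor
    rintro a b ⟨h1, h2⟩
    exact ⟨h1.symm, by rw [hs b.1 a.1, ← h2]; exact Bool.xor_comm _ _⟩
  loopless := by constructor; rintro a ⟨h1, _⟩; exact G.loopless.irrefl a.1 h1

/-- The bipartite double cover `G × K₂`: the 2-lift in which every edge is crossing. -/
def doubleCover {V : Type} (G : SimpleGraph V) : SimpleGraph (V × Bool) :=
  twoLift G (fun _ _ => true) (fun _ _ => rfl)

/-- The number of matchings of size `k` in `H`: sets of `k` pairwise disjoint edges. -/
noncomputable def matchingCount {W : Type} [Fintype W] (H : SimpleGraph W) (k : ℕ) : ℕ :=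
  Nat.card {M : Finset (Sym2 W) // M.card = k ∧ (↑M : Set (Sym2 W)) ⊆ H.edgeSet ∧
    (↑M : Set (Sym2 W)).Pairwise fun e f => ∀ v : W, v ∈ e → v ∉ f}

/-!
Read a matching `M` of a 2-lift as a graph on `V × Bool`. Together with the fibres
`{(v, false), (v, true)}` it forms a union of two matchings, which is bipartite (by induction,
contracting one fibre at a time); a 2-colouring
separating every fibre is `(v, c) ↦ t v ^^ c` for a switching `t : V → Bool`, and after switching
the copies over `{v | t v}` every edge of `M` crosses between the two layers, i.e. lies in `G × K₂`.
The switching can be chosen as a function of the projection of `M` to `G` alone; then `M` is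
recovered from its image by switching back, so `M ↦ switch t '' M` is an injection from the
matchings of the 2-lift into those of `G × K₂` preserving size.
-/

theorem Bool.xor_ne_xor_iff {a b c d : Bool} : (a ^^ c) ≠ (b ^^ d) ↔ (a ^^ b) = !(c ^^ d) := by
  decide +revert

theorem SimpleGraph.neighborSet_fromEdgeSet_subsingleton {W : Type} {M : Set (Sym2 W)}
    (hM : M.Pairwise fun e f => ∀ v : W, v ∈ e → v ∉ f) (a : W) :
    ((SimpleGraph.fromEdgeSet M).neighborSet a).Subsingleton := by
  intro b hb c hc
  rw [SimpleGraph.mem_neighborSet, SimpleGraph.fromEdgeSet_adj] at hb hc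
  by_contra hbc
  exact hM hb.1 hc.1 (fun h => hbc (Sym2.congr_right.mp h)) a
    (Sym2.mem_mk_left _ _) (Sym2.mem_mk_left _ _)

theorem Finset.pairwise_image_sym2Map {W W' : Type} [DecidableEq W'] {g : W → W'}
    (hg : Function.Injective g) {M : Finset (Sym2 W)}
    (hM : (↑M : Set (Sym2 W)).Pairwise fun e f => ∀ v : W, v ∈ e → v ∉ f) :
    (↑(M.image (Sym2.map g)) : Set (Sym2 W')).Pairwise fun e f => ∀ v : W', v ∈ e → v ∉ f := by
  rw [Finset.coe_image]
  rintro _ ⟨e, he, rfl⟩ _ ⟨f, hf, rfl⟩ hef _ hv hv'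
  obtain ⟨w, hw, rfl⟩ := Sym2.mem_map.mp hv
  obtain ⟨w', hw', hww'⟩ := Sym2.mem_map.mp hv'
  exact hM he hf (fun h => hef (h ▸ rfl)) w hw (hg hww' ▸ hw')

namespace TwoLift

variable {V : Type}

def switch (t : V → Bool) (x : V × Bool) : V × Bool := (x.1, t x.1 ^^ x.2)

theorem switch_involutive (t : V → Bool) : Function.Involutive (switch t) :=
  fun x => by simp [switch]

def SwitchesToCrossing (t : V → Bool) (M : SimpleGraph (V × Bool)) : Prop :=
  ∀ ⦃a b⦄, M.Adj a b → (switch t a).2 ≠ (switch t b).2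

/-- Remove the fibre over `u`, joining the former partners of its two vertices. -/
def contractFiber (M : SimpleGraph (V × Bool)) (u : V) : SimpleGraph (V × Bool) where
  Adj a b := a ≠ b ∧ a.1 ≠ u ∧ b.1 ≠ u ∧ (M.Adj a b ∨ ∃ c, M.Adj (u, c) a ∧ M.Adj (u, !c) b)
  symm := ⟨fun a b => by
    rintro ⟨hne, ha, hb, h | ⟨c, h₁, h₂⟩⟩
    · exact ⟨hne.symm, hb, ha, .inl h.symm⟩
    · exact ⟨hne.symm, hb, ha, .inr ⟨!c, h₂, by rwa [Bool.not_not]⟩⟩⟩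
  loopless := ⟨fun _ h => h.1 rfl⟩

theorem contractFiber_adj {M : SimpleGraph (V × Bool)} {u : V} {a b : V × Bool} :
    (contractFiber M u).Adj a b ↔
      a ≠ b ∧ a.1 ≠ u ∧ b.1 ≠ u ∧ (M.Adj a b ∨ ∃ c, M.Adj (u, c) a ∧ M.Adj (u, !c) b) :=
  Iff.rfl

variable {M : SimpleGraph (V × Bool)}

theorem neighborSet_contractFiber_subsingleton (hM : ∀ a, (M.neighborSet a).Subsingleton)
    (u : V) (a : V × Bool) : ((contractFiber M u).neighborSet a).Subsingleton := by
  intro b hb d hd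
  rw [SimpleGraph.mem_neighborSet, contractFiber_adj] at hb hd
  obtain ⟨-, ha, hb, hab | ⟨c, hca, hcb⟩⟩ := hb
  all_goals obtain ⟨-, -, hd, had | ⟨c', hca', hcd⟩⟩ := hd
  · exact hM a hab had
  · exact absurd (congrArg Prod.fst (hM a hab hca'.symm)) hb
  · exact absurd (congrArg Prod.fst (hM a had hca.symm)) hd
  · obtain rfl : c = c' := by simpa using hM a hca.symm hca'.symm
    exact hM _ hcb hcd

theorem exists_switchesToCrossing_update (hM : ∀ a, (M.neighborSet a).Subsingleton) {u : V}
    {t : V → Bool} (ht : SwitchesToCrossing t (contractFiber M u)) :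
    ∃ c, SwitchesToCrossing (Function.update t u c) M := by
  have hc : ∃ c, ∀ i y, M.Adj (u, i) y → y.1 ≠ u → (c ^^ i) ≠ (switch t y).2 := by
    by_cases h : ∃ i y, M.Adj (u, i) y ∧ y.1 ≠ u
    · obtain ⟨i, y, hy, hyu⟩ := h
      refine ⟨!(switch t y).2 ^^ i, fun j z hz hzu => ?_⟩
      rcases Bool.eq_or_eq_not j i with rfl | rfl
      · rw [hM _ hz hy]
        simp
      · have hyz : (contractFiber M u).Adj y z := contractFiber_adj.mpr
          ⟨fun h => by subst h; simpa using hM y hy.symm hz.symm, hyu, hzu, .inr ⟨i, hy, hz⟩⟩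
        have := ht hyz
        revert this
        cases (switch t y).2 <;> cases (switch t z).2 <;> cases i <;> simp
    · exact ⟨false, fun i y hy hyu => (h ⟨i, y, hy, hyu⟩).elim⟩
  obtain ⟨c, hc⟩ := hc
  refine ⟨c, ?_⟩
  rintro ⟨v, i⟩ ⟨w, j⟩ hvw
  by_cases hv : v = u <;> by_cases hw : w = u
  · subst hv hw
    have hij : i ≠ j := fun h => M.irrefl (h ▸ hvw)
    simpa [switch] using hij
  · subst hv
    simpa [switch, hw] using hc i (w, j) hvw hw
  · subst hw
    simpa [switch, hv, eq_comm] using hc j (v, i) hvw.symm hv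
  · simpa [switch, hv, hw] using ht <| contractFiber_adj.mpr ⟨M.ne_of_adj hvw, hv, hw, .inl hvw⟩

theorem exists_switchesToCrossing [Finite V] (hM : ∀ a, (M.neighborSet a).Subsingleton) :
    ∃ t, SwitchesToCrossing t M := by
  have := Fintype.ofFinite V
  obtain ⟨S, hS⟩ : ∃ S : Finset V, ∀ a b, M.Adj a b → a.1 ∈ S :=
    ⟨Finset.univ, fun _ _ _ => Finset.mem_univ _⟩
  induction S using Finset.induction_on generalizing M with
  | empty => exact ⟨fun _ => false, fun a b h => absurd (hS a b h) (Finset.notMem_empty _)⟩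
  | insert u S _ ih =>
    refine (ih (neighborSet_contractFiber_subsingleton hM u) fun a b h => ?_).elim
      fun t ht => (exists_switchesToCrossing_update hM ht).elim fun _ h => ⟨_, h⟩
    obtain ⟨-, ha, -, hab | ⟨c, hca, -⟩⟩ := contractFiber_adj.mp h
    · exact (Finset.mem_insert.mp (hS a b hab)).resolve_left ha
    · exact (Finset.mem_insert.mp (hS a _ hca.symm)).resolve_left ha

def IsSwitching (s : V → V → Bool) (F : Finset (Sym2 V)) (t : V → Bool) : Prop :=
  ∀ u v, s(u, v) ∈ F → (t u ^^ t v) = !s u v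

noncomputable abbrev project (M : Finset (Sym2 (V × Bool))) : Finset (Sym2 V) :=
  M.image (Sym2.map Prod.fst)

variable {G : SimpleGraph V} {s : V → V → Bool} {hs : ∀ u v, s u v = s v u}

theorem isSwitching_project {M : Finset (Sym2 (V × Bool))} {t : V → Bool}
    (hMH : (↑M : Set (Sym2 (V × Bool))) ⊆ (twoLift G s hs).edgeSet)
    (ht : SwitchesToCrossing t (SimpleGraph.fromEdgeSet ↑M)) : IsSwitching s (project M) t := by
  intro u v huv
  obtain ⟨e, he, hproj⟩ := Finset.mem_image.mp huv
  induction e using Sym2.ind with | h x y => ?_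
  obtain ⟨-, hlift⟩ := hMH he
  have hcross : (t x.1 ^^ x.2) ≠ (t y.1 ^^ y.2) :=
    ht (by rw [SimpleGraph.fromEdgeSet_adj]; exact ⟨he, (twoLift G s hs).ne_of_adj (hMH he)⟩)
  rw [Bool.xor_ne_xor_iff, hlift] at hcross
  rcases Sym2.eq_iff.mp hproj with ⟨rfl, rfl⟩ | ⟨rfl, rfl⟩
  · exact hcross
  · rw [Bool.xor_comm, hs, hcross]

theorem map_switch_mem_edgeSet_doubleCover {F : Finset (Sym2 V)} {t : V → Bool}
    (ht : IsSwitching s F t) {e : Sym2 (V × Bool)} (he : e ∈ (twoLift G s hs).edgeSet)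
    (hF : e.map Prod.fst ∈ F) : e.map (switch t) ∈ (doubleCover G).edgeSet := by
  induction e using Sym2.ind with | h x y => ?_
  obtain ⟨hG, hlift⟩ := he
  refine ⟨hG, ?_⟩
  have hcross : (t x.1 ^^ x.2) ≠ (t y.1 ^^ y.2) := by
    rw [Bool.xor_ne_xor_iff, hlift]
    exact ht _ _ hF
  exact Bool.xor_iff_ne.mpr hcross

theorem exists_isSwitching_project {M : Finset (Sym2 (V × Bool))} [Finite V]
    (hMH : (↑M : Set (Sym2 (V × Bool))) ⊆ (twoLift G s hs).edgeSet)
    (hM : (↑M : Set (Sym2 (V × Bool))).Pairwise fun e f => ∀ v, v ∈ e → v ∉ f) :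
    ∃ t, IsSwitching s (project M) t :=
  (exists_switchesToCrossing (SimpleGraph.neighborSet_fromEdgeSet_subsingleton hM)).imp
    fun _ => isSwitching_project hMH

noncomputable def switching (s : V → V → Bool) (F : Finset (Sym2 V)) : V → Bool :=
  Classical.epsilon (IsSwitching s F)

noncomputable def switchMatching (s : V → V → Bool) (M : Finset (Sym2 (V × Bool))) :
    Finset (Sym2 (V × Bool)) :=
  M.image (Sym2.map (switch (switching s (project M))))

theorem project_image_switch (t : V → Bool) (M : Finset (Sym2 (V × Bool))) :
    project (M.image (Sym2.map (switch t))) = project M := by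
  rw [project, Finset.image_image]
  congr 1
  funext e
  exact Sym2.map_map e

theorem switchMatching_injective (s : V → V → Bool) : Function.Injective (switchMatching s) := by
  intro M N h
  have hproj : project M = project N := by
    rw [← project_image_switch _ M, ← project_image_switch _ N]
    exact congrArg project h
  unfold switchMatching at h
  rw [hproj] at h
  exact Finset.image_injective (Sym2.map.injective (switch_involutive _).injective) h

theorem card_switchMatching (s : V → V → Bool) (M : Finset (Sym2 (V × Bool))) :
    (switchMatching s M).card = M.card :=
  Finset.card_image_of_injective _ (Sym2.map.injective (switch_involutive _).injective)

theorem pairwise_switchMatching (s : V → V → Bool) {M : Finset (Sym2 (V × Bool))}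
    (hM : (↑M : Set (Sym2 (V × Bool))).Pairwise fun e f => ∀ v, v ∈ e → v ∉ f) :
    (↑(switchMatching s M) : Set (Sym2 (V × Bool))).Pairwise fun e f => ∀ v, v ∈ e → v ∉ f := by
  unfold switchMatching
  exact Finset.pairwise_image_sym2Map (switch_involutive _).injective hM

theorem switchMatching_subset_edgeSet [Finite V] {M : Finset (Sym2 (V × Bool))}
    (hMH : (↑M : Set (Sym2 (V × Bool))) ⊆ (twoLift G s hs).edgeSet)
    (hM : (↑M : Set (Sym2 (V × Bool))).Pairwise fun e f => ∀ v, v ∈ e → v ∉ f) :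
    (↑(switchMatching s M) : Set (Sym2 (V × Bool))) ⊆ (doubleCover G).edgeSet := by
  have ht := Classical.epsilon_spec (exists_isSwitching_project hMH hM)
  intro e' he'
  obtain ⟨e, he, rfl⟩ := Finset.mem_image.mp he'
  exact map_switch_mem_edgeSet_doubleCover ht (hMH he) (Finset.mem_image_of_mem _ he)

end TwoLift

theorem matchings_of_two_lift_le {V : Type} [Fintype V] (G : SimpleGraph V)
    (s : V → V → Bool) (hs : ∀ u v, s u v = s v u) (k : ℕ) :
    matchingCount (twoLift G s hs) k ≤ matchingCount (doubleCover G) k := by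
  refine Nat.card_le_card_of_injective (fun M => ⟨TwoLift.switchMatching s M.1, ?_⟩) ?_
  · obtain ⟨M, hcard, hMH, hM⟩ := M
    exact ⟨(TwoLift.card_switchMatching s M).trans hcard,
      TwoLift.switchMatching_subset_edgeSet hMH hM, TwoLift.pairwise_switchMatching s hM⟩
  · exact fun M N h => Subtype.ext (TwoLift.switchMatching_injective s (congrArg Subtype.val h))
end

section
/- Let A be a nonnegative symmetric q × q real matrix that is TN₂ (every 2 × 2 minor of A is nonpositive). Then for any finite graph G and any 2-lift H of G, we have Z(G × K₂, A) ≥ Z(H,A). In particular Z(G,A)² ≤ Z(G × K₂, A). -/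
open scoped Classical

/-- The homomorphism partition function `Z(G,A) = Σ_φ Π_{(u,v)∈E(G)} A (φ u) (φ v)`.
(Each edge is an unordered pair; for symmetric `A` the choice of representative is immaterial.) -/
noncomputable def Z {V ι : Type} [Fintype V] [Fintype ι] (G : SimpleGraph V)
    (A : Matrix ι ι ℝ) : ℝ :=
  ∑ φ : V → ι, ∏ e ∈ G.edgeFinset,
    A (φ (Quot.out e).1) (φ (Quot.out e).2)

/-!
A colouring `ψ` of `V × Bool` is a pair of colourings of `V`, one per sheet. Swapping the sheets
above the vertices where `η` holds turns the lift with signing `t` into the one with signing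
`t e ⊕ η u ⊕ η v`, so averaging over all `η` writes `Z` of a 2-lift as a sum over `ψ` of Ising
partition functions. Switching `ψ` so that each vertex carries its two colours in increasing order
does not change these Ising sums, and afterwards TN₂ says that each edge has a larger crossing than
parallel weight. Writing the weights as `m + d · spin` and expanding the product, each term is a
product of coefficients times a character sum `∑ ε, ∏ spin ≥ 0`, so the all-crossing
(ferromagnetic) signing maximizes every Ising sum. The all-parallel lift is `G ∪ G`.
-/

open Finset

lemma Sym2.mk_out_fst_snd {α : Type*} (e : Sym2 α) : s(e.out.1, e.out.2) = e := e.out_eq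

lemma Sym2.lift_out {α β : Type*} {f : α → α → β} (hf : ∀ a b, f a b = f b a) (e : Sym2 α) :
    f e.out.1 e.out.2 = Sym2.lift ⟨f, hf⟩ e := by
  conv_rhs => rw [← e.mk_out_fst_snd]
  rfl

section TwoLift

variable {V : Type} (G : SimpleGraph V) (s : V → V → Bool) (hs : ∀ u v, s u v = s v u)

lemma twoLift_adj {a b : V × Bool} :
    (twoLift G s hs).Adj a b ↔ G.Adj a.1 b.1 ∧ xor a.2 b.2 = s a.1 b.1 := Iff.rfl

lemma twoLift_edgeFinset_fiber [Fintype V] {u v : V} (huv : G.Adj u v) :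
    {E ∈ (twoLift G s hs).edgeFinset | E.map Prod.fst = s(u, v)}
      = univ.image fun c => s((u, c), (v, xor c (s u v))) := by
  ext E
  induction E using Sym2.ind with
  | _ a b =>
  obtain ⟨a, c⟩ := a
  obtain ⟨b, d⟩ := b
  simp only [mem_filter, SimpleGraph.mem_edgeFinset, SimpleGraph.mem_edgeSet, twoLift_adj,
    Sym2.map_mk, mem_image, mem_univ, true_and, Sym2.eq_iff, Prod.mk.injEq]
  constructor
  · rintro ⟨⟨-, hcd⟩, ⟨rfl, rfl⟩ | ⟨rfl, rfl⟩⟩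
    · exact ⟨c, .inl ⟨⟨rfl, rfl⟩, rfl, by simp [← hcd]⟩⟩
    · exact ⟨d, .inr ⟨⟨rfl, rfl⟩, rfl, by simp [hs b, ← hcd, Bool.xor_left_comm]⟩⟩
  · rintro ⟨c, ⟨⟨rfl, rfl⟩, rfl, rfl⟩ | ⟨⟨rfl, rfl⟩, rfl, rfl⟩⟩
    · simp [huv]
    · cases c <;> simp [huv.symm, hs u]

lemma prod_edgeFinset_twoLift [Fintype V] {M : Type*} [CommMonoid M]
    (F : Sym2 (V × Bool) → M) :
    ∏ E ∈ (twoLift G s hs).edgeFinset, F E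
      = ∏ e ∈ G.edgeFinset, ∏ c : Bool,
          F s((e.out.1, c), (e.out.2, xor c (s e.out.1 e.out.2))) := by
  have hmaps : ∀ E ∈ (twoLift G s hs).edgeFinset, E.map Prod.fst ∈ G.edgeFinset := by
    intro E hE
    induction E using Sym2.ind with
    | _ a b => simpa using ((twoLift G s hs).mem_edgeFinset.mp hE).1
  rw [← prod_fiberwise_of_maps_to hmaps]
  refine prod_congr rfl fun e he => ?_
  rw [← Sym2.mk_out_fst_snd e, SimpleGraph.mem_edgeFinset, SimpleGraph.mem_edgeSet] at he
  conv_lhs => rw [← Sym2.mk_out_fst_snd e]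
  rw [twoLift_edgeFinset_fiber G s hs he, prod_image]
  intro c _ c' _ h
  rcases Sym2.eq_iff.mp h with h | h
  · exact (Prod.mk.inj h.1).2
  · exact absurd (congrArg Prod.fst h.1) he.ne

end TwoLift

section Ising

variable {ι κ : Type*} [Fintype ι]

def spin (b : Bool) : ℝ := if b then -1 else 1

lemma spin_xor (a b : Bool) : spin (xor a b) = spin a * spin b := by
  cases a <;> cases b <;> norm_num [spin]

lemma abs_spin (b : Bool) : |spin b| = 1 := by
  cases b <;> norm_num [spin]

lemma prod_spin_comp (S : Finset κ) (u : κ → ι) (ε : ι → Bool) :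
    ∏ e ∈ S, spin (ε (u e)) = ∏ i, spin (ε i) ^ #{e ∈ S | u e = i} := by
  simp_rw [← prod_const, prod_fiberwise_of_maps_to' fun e _ => mem_univ (u e)]

/-- The sum factors over the vertices as `∏ i, (1 + (-1) ^ deg i)`. -/
lemma sum_prod_spin_mul_spin_nonneg (S : Finset κ) (u v : κ → ι) :
    0 ≤ ∑ ε : ι → Bool, ∏ e ∈ S, spin (ε (u e)) * spin (ε (v e)) := by
  set deg : ι → ℕ := fun i => #{e ∈ S | u e = i} + #{e ∈ S | v e = i}
  have hprod (ε : ι → Bool) :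
      ∏ e ∈ S, spin (ε (u e)) * spin (ε (v e)) = ∏ i, spin (ε i) ^ deg i := by
    simp_rw [prod_mul_distrib, prod_spin_comp, ← prod_mul_distrib, ← pow_add, deg]
  simp_rw [hprod, ← Fintype.prod_sum (fun i b => spin b ^ deg i)]
  refine prod_nonneg fun i _ => ?_
  rcases neg_one_pow_eq_or ℝ (deg i) with h | h <;> simp [spin, h]

/-- High-temperature expansion: both sides are sums over `T ⊆ S` of `∏ e ∈ T, c e` (resp. `d e`)
times a nonnegative character sum times `∏ e ∈ S \ T, m e`. -/
lemma sum_prod_add_spin_le (S : Finset κ) (u v : κ → ι) {m c d : κ → ℝ}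
    (hm : ∀ e ∈ S, 0 ≤ m e) (hcd : ∀ e ∈ S, |c e| ≤ d e) :
    ∑ ε : ι → Bool, ∏ e ∈ S, (c e * (spin (ε (u e)) * spin (ε (v e))) + m e)
      ≤ ∑ ε : ι → Bool, ∏ e ∈ S, (d e * (spin (ε (u e)) * spin (ε (v e))) + m e) := by
  have expand (a : κ → ℝ) :
      ∑ ε : ι → Bool, ∏ e ∈ S, (a e * (spin (ε (u e)) * spin (ε (v e))) + m e)
        = ∑ T ∈ S.powerset, (∏ e ∈ T, a e) *
            (∑ ε : ι → Bool, ∏ e ∈ T, spin (ε (u e)) * spin (ε (v e))) * ∏ e ∈ S \ T, m e := by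
    simp_rw [prod_add, prod_mul_distrib]
    rw [sum_comm]
    simp_rw [← sum_mul, ← mul_sum]
  rw [expand, expand]
  refine sum_le_sum fun T hT => ?_
  have hcd' : ∏ e ∈ T, c e ≤ ∏ e ∈ T, d e :=
    (le_abs_self _).trans <| (abs_prod _ _).trans_le <|
      prod_le_prod (fun _ _ => abs_nonneg _) fun e he => hcd e (mem_powerset.mp hT he)
  have hm' : 0 ≤ ∏ e ∈ S \ T, m e := prod_nonneg fun e he => hm e (mem_sdiff.mp he).1
  gcongr
  exact sum_prod_spin_mul_spin_nonneg T u v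

noncomputable def isingSum (S : Finset κ) (u v : κ → ι) (w : κ → Bool → ℝ) (t : κ → Bool) : ℝ :=
  ∑ ε : ι → Bool, ∏ e ∈ S, w e (xor (t e) (xor (ε (u e)) (ε (v e))))

theorem isingSum_le_isingSum_true {S : Finset κ} {u v : κ → ι} {w : κ → Bool → ℝ}
    (hw₀ : ∀ e ∈ S, 0 ≤ w e false) (hw : ∀ e ∈ S, w e false ≤ w e true) (t : κ → Bool) :
    isingSum S u v w t ≤ isingSum S u v w (fun _ => true) := by
  have hspin (e : κ) (b : Bool) :
      w e b = (w e false - w e true) / 2 * spin b + (w e false + w e true) / 2 := by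
    cases b <;> simp [spin] <;> ring
  have hsplit (r x y : Bool) (e : κ) : w e (xor r (xor x y))
      = (w e false - w e true) / 2 * spin r * (spin x * spin y) + (w e false + w e true) / 2 := by
    rw [hspin e, spin_xor, spin_xor, mul_assoc]
  simp only [isingSum, hsplit]
  refine sum_prod_add_spin_le S u v (fun e he => by linarith [hw₀ e he, hw e he]) fun e he => ?_
  rw [abs_mul, abs_spin, abs_of_nonpos (by linarith [hw e he])]
  norm_num [spin]

theorem isingSum_gauge (S : Finset κ) (u v : κ → ι) (w : κ → Bool → ℝ) (t : κ → Bool)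
    (η : ι → Bool) :
    isingSum S u v (fun e b => w e (xor b (xor (η (u e)) (η (v e))))) t = isingSum S u v w t := by
  have hinv : Function.Involutive fun (ε : ι → Bool) i => xor (ε i) (η i) := fun ε => by
    simp
  refine Fintype.sum_equiv hinv.toPerm _ _ fun ε => prod_congr rfl fun e _ => ?_
  simp only [Function.Involutive.coe_toPerm]
  congr 1
  simp only [Bool.xor_left_comm, Bool.xor_comm]

end Ising

def IsTN2 {ι : Type*} [LinearOrder ι] (A : Matrix ι ι ℝ) : Prop :=
  ∀ i j r s : ι, i < j → r < s → A i r * A j s - A i s * A j r ≤ 0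

lemma IsTN2.mul_le_mul {ι : Type*} [LinearOrder ι] {A : Matrix ι ι ℝ} (hA : IsTN2 A)
    {a b c d : ι} (hab : a ≤ b) (hcd : c ≤ d) : A a c * A b d ≤ A a d * A b c := by
  rcases hab.eq_or_lt with rfl | hab
  · exact (mul_comm _ _).le
  rcases hcd.eq_or_lt with rfl | hcd
  · exact le_rfl
  linarith [hA a b c d hab hcd]

section Switching

variable {V ι : Type}

/-- `ψ (v, c)` is the colour of `v` in sheet `c`; `liftWeight A ψ e b` is the weight of the two
lifts of `e`, parallel if `b = false` and crossing if `b = true`. -/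
noncomputable def liftWeight (A : Matrix ι ι ℝ) (ψ : V × Bool → ι) (e : Sym2 V) (b : Bool) : ℝ :=
  ∏ c : Bool, A (ψ (e.out.1, c)) (ψ (e.out.2, xor c b))

def switch (η : V → Bool) (ψ : V × Bool → ι) : V × Bool → ι :=
  fun p => ψ (p.1, xor p.2 (η p.1))

lemma switch_involutive (η : V → Bool) : Function.Involutive (switch (ι := ι) η) := fun ψ => by
  funext p
  simp [switch]

lemma liftWeight_switch (A : Matrix ι ι ℝ) (η : V → Bool) (ψ : V × Bool → ι) (e : Sym2 V)
    (b : Bool) :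
    liftWeight A (switch η ψ) e b = liftWeight A ψ e (xor b (xor (η e.out.1) (η e.out.2))) := by
  have hinv : Function.Involutive fun c => xor c (η e.out.1) := fun c => by simp
  refine Fintype.prod_equiv hinv.toPerm _ _ fun c => ?_
  simp only [switch, Function.Involutive.coe_toPerm]
  congr 3
  simp [Bool.xor_left_comm]

lemma exists_switch_le [LinearOrder ι] (ψ : V × Bool → ι) :
    ∃ η : V → Bool, ∀ v, switch η ψ (v, false) ≤ switch η ψ (v, true) := by
  refine ⟨fun v => decide (ψ (v, true) < ψ (v, false)), fun v => ?_⟩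
  by_cases h : ψ (v, true) < ψ (v, false)
  · simpa [switch, h] using h.le
  · simpa [switch, h] using not_lt.mp h

lemma liftWeight_false_le_true [LinearOrder ι] {A : Matrix ι ι ℝ} (hA : IsTN2 A)
    {ψ : V × Bool → ι} (hψ : ∀ v, ψ (v, false) ≤ ψ (v, true)) (e : Sym2 V) :
    liftWeight A ψ e false ≤ liftWeight A ψ e true := by
  simp only [liftWeight, Fintype.prod_bool, Bool.xor_false, Bool.true_xor, Bool.false_xor,
    Bool.not_true]
  linarith [hA.mul_le_mul (hψ e.out.1) (hψ e.out.2)]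

variable [Fintype V]

lemma isingSum_liftWeight_le [LinearOrder ι] {A : Matrix ι ι ℝ} (hnn : ∀ i j, 0 ≤ A i j)
    (hA : IsTN2 A) (G : SimpleGraph V) (ψ : V × Bool → ι) (t : Sym2 V → Bool) :
    isingSum G.edgeFinset (fun e => e.out.1) (fun e => e.out.2) (liftWeight A ψ) t
      ≤ isingSum G.edgeFinset (fun e => e.out.1) (fun e => e.out.2) (liftWeight A ψ)
          (fun _ => true) := by
  obtain ⟨η, hη⟩ := exists_switch_le ψ
  have hgauge (r : Sym2 V → Bool) :
      isingSum G.edgeFinset (fun e => e.out.1) (fun e => e.out.2) (liftWeight A ψ) r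
        = isingSum G.edgeFinset (fun e => e.out.1) (fun e => e.out.2)
            (liftWeight A (switch η ψ)) r := by
    rw [show liftWeight A (switch η ψ) = _ from funext₂ (liftWeight_switch A η ψ), isingSum_gauge]
  rw [hgauge, hgauge]
  exact isingSum_le_isingSum_true
    (fun e _ => prod_nonneg fun _ _ => hnn _ _) (fun e _ => liftWeight_false_le_true hA hη e) t

variable [Fintype ι]

noncomputable def liftSum (A : Matrix ι ι ℝ) (G : SimpleGraph V) (t : Sym2 V → Bool) : ℝ :=
  ∑ ψ : V × Bool → ι, ∏ e ∈ G.edgeFinset, liftWeight A ψ e (t e)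

lemma liftSum_switch (A : Matrix ι ι ℝ) (G : SimpleGraph V) (t : Sym2 V → Bool)
    (η : V → Bool) :
    liftSum A G (fun e => xor (t e) (xor (η e.out.1) (η e.out.2))) = liftSum A G t :=
  Fintype.sum_equiv (switch_involutive η).toPerm _ _ fun ψ => by
    simp [liftWeight_switch]

theorem liftSum_le_liftSum_true [LinearOrder ι] {A : Matrix ι ι ℝ} (hnn : ∀ i j, 0 ≤ A i j)
    (hA : IsTN2 A) (G : SimpleGraph V) (t : Sym2 V → Bool) :
    liftSum A G t ≤ liftSum A G (fun _ => true) := by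
  have hcard : (0 : ℝ) < Fintype.card (V → Bool) := by exact_mod_cast Fintype.card_pos
  have haverage (r : Sym2 V → Bool) : Fintype.card (V → Bool) * liftSum A G r
      = ∑ ψ : V × Bool → ι,
          isingSum G.edgeFinset (fun e => e.out.1) (fun e => e.out.2) (liftWeight A ψ) r := by
    calc Fintype.card (V → Bool) * liftSum A G r
        = ∑ η : V → Bool, liftSum A G (fun e => xor (r e) (xor (η e.out.1) (η e.out.2))) := by
          simp [liftSum_switch]
      _ = _ := sum_comm
  refine le_of_mul_le_mul_left ?_ hcard
  rw [haverage, haverage]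
  exact sum_le_sum fun ψ _ => isingSum_liftWeight_le hnn hA G ψ t

end Switching

variable {V ι : Type} [Fintype V] [Fintype ι]

lemma Z_twoLift {A : Matrix ι ι ℝ} (hA : A.IsSymm) (G : SimpleGraph V)
    (s : V → V → Bool) (hs : ∀ u v, s u v = s v u) :
    Z (twoLift G s hs) A = liftSum A G (fun e => s e.out.1 e.out.2) := by
  rw [Z, liftSum]
  -- The two sums over `V × Bool → ι` are built from different `DecidableEq (V × Bool)` instances.
  refine sum_congr (by congr; exact Subsingleton.elim _ _) fun ψ _ => ?_
  have hψ (a b : V × Bool) : A (ψ a) (ψ b) = A (ψ b) (ψ a) := hA.apply (ψ b) (ψ a)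
  rw [prod_congr rfl fun E _ => Sym2.lift_out (f := fun a b => A (ψ a) (ψ b)) hψ E,
    prod_edgeFinset_twoLift]
  rfl

lemma sq_Z_eq_liftSum_false (A : Matrix ι ι ℝ) (G : SimpleGraph V) :
    Z G A ^ 2 = liftSum A G (fun _ => false) := by
  let F (φ : V → ι) : ℝ := ∏ e ∈ G.edgeFinset, A (φ e.out.1) (φ e.out.2)
  calc Z G A ^ 2 = ∏ _c : Bool, ∑ φ : V → ι, F φ := by simp [Z, F, sq]
    _ = ∑ φ : Bool → V → ι, ∏ c, F (φ c) := Fintype.prod_sum fun _ => F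
    _ = liftSum A G (fun _ => false) := by
      refine (Fintype.sum_equiv ((Equiv.curry V Bool ι).trans (Equiv.piComm _)) _ _
        fun ψ => ?_).symm
      simp only [liftWeight, Bool.xor_false, F]
      exact prod_comm

theorem TN2_two_lift {q : ℕ} (A : Matrix (Fin q) (Fin q) ℝ)
    (hnn : ∀ i j, 0 ≤ A i j) (hsymm : A.IsSymm)
    (hTN : ∀ i j r s : Fin q, i < j → r < s → A i r * A j s - A i s * A j r ≤ 0)
    {V : Type} [Fintype V] (G : SimpleGraph V)
    (s : V → V → Bool) (hs : ∀ u v, s u v = s v u) :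
    Z (twoLift G s hs) A ≤ Z (doubleCover G) A ∧ (Z G A) ^ 2 ≤ Z (doubleCover G) A := by
  have hle := liftSum_le_liftSum_true hnn hTN G
  rw [doubleCover, Z_twoLift hsymm, Z_twoLift hsymm, sq_Z_eq_liftSum_false]
  exact ⟨hle _, hle _⟩
end

section
/- Let A be a nonnegative symmetric q × q real matrix that is TN₂. Then for any bipartite graph G and any 2-lift H of G, we have Z(G,A)² ≥ Z(H,A). -/
open scoped Classical

/-!
Encode a pair of maps `V → ι` as one map `x : V → ι × ι`. An edge `uw` then has weight `a + b` in
`Z(G)²` and, in a 2-lift where it crosses, weight `a - b`; here `a` and `b` are the symmetric and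
antisymmetric parts of `A(x_u.1, x_w.1) A(x_u.2, x_w.2)` under swapping the coordinates of `x_w`.
Expanding the product over the edges gives `Z(H) = Σ_t σ_t C_t` with signs `σ_t = ±1` and
`C_t = Σ_x Π_{e ∈ t} b_e Π_{e ∉ t} a_e`. Swapping the coordinates of `x_v` for all `v ∈ S` multiplies
`C_t` by `(-1)^|t ∩ ∂S|`, so `C_t = 0` unless `t` meets every cut evenly; in that case sorting every
pair `x_v` leaves each summand of `C_t` unchanged and makes every `b_e ≤ 0` by TN₂, so
`(-1)^|t| C_t ≥ 0`. As the all-crossing lift `G × K₂` has `σ_t = (-1)^|t|`, this gives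
`Z(H) ≤ Z(G × K₂)` for every graph `G`. For bipartite `G`, the same switching at one colour class
identifies `Z(G × K₂)` with `Z(G ∪ G) = Z(G)²`.
-/

open Finset

namespace TwoLift

section Pairs

variable {ι : Type}

def condSwap (c : Bool) (p : ι × ι) : ι × ι := if c then p.swap else p

lemma condSwap_condSwap (c : Bool) (p : ι × ι) : condSwap c (condSwap c p) = p := by
  cases c <;> simp [condSwap]

lemma condSwap_sorted [LinearOrder ι] (p : ι × ι) :
    (condSwap (decide (p.2 < p.1)) p).1 ≤ (condSwap (decide (p.2 < p.1)) p).2 := by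
  by_cases h : p.2 < p.1 <;> simp [condSwap, h, le_of_lt, not_lt.mp]

def sgn (b : Bool) : ℝ := if b then -1 else 1

lemma abs_sgn (b : Bool) : |sgn b| = 1 := by
  cases b <;> norm_num [sgn]

variable (A : Matrix ι ι ℝ)

def pairWeight (b : Bool) (p r : ι × ι) : ℝ :=
  if b then A p.1 r.2 * A p.2 r.1 else A p.1 r.1 * A p.2 r.2

noncomputable def symPart (p r : ι × ι) : ℝ := (A p.1 r.1 * A p.2 r.2 + A p.1 r.2 * A p.2 r.1) / 2

noncomputable def antiPart (p r : ι × ι) : ℝ := (A p.1 r.1 * A p.2 r.2 - A p.1 r.2 * A p.2 r.1) / 2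

lemma pairWeight_eq (b : Bool) (p r : ι × ι) :
    pairWeight A b p r = sgn b * antiPart A p r + symPart A p r := by
  cases b <;> simp only [pairWeight, sgn, symPart, antiPart] <;> norm_num <;> ring

lemma pairWeight_condSwap (b c d : Bool) (p r : ι × ι) :
    pairWeight A b (condSwap c p) (condSwap d r) = pairWeight A (xor b (xor c d)) p r := by
  cases b <;> cases c <;> cases d <;> simp [pairWeight, condSwap] <;> ring

lemma symPart_condSwap (c d : Bool) (p r : ι × ι) :
    symPart A (condSwap c p) (condSwap d r) = symPart A p r := by
  cases c <;> cases d <;> simp [symPart, condSwap] <;> ring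

lemma antiPart_condSwap (c d : Bool) (p r : ι × ι) :
    antiPart A (condSwap c p) (condSwap d r) = sgn (xor c d) * antiPart A p r := by
  cases c <;> cases d <;> simp [antiPart, condSwap, sgn] <;> ring

lemma symPart_nonneg (hnn : ∀ i j, 0 ≤ A i j) (p r : ι × ι) : 0 ≤ symPart A p r := by
  have := hnn p.1 r.1; have := hnn p.2 r.2; have := hnn p.1 r.2; have := hnn p.2 r.1
  unfold symPart
  positivity

lemma antiPart_nonpos [LinearOrder ι]
    (hTN : ∀ i j r s : ι, i < j → r < s → A i r * A j s - A i s * A j r ≤ 0)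
    {p r : ι × ι} (hp : p.1 ≤ p.2) (hr : r.1 ≤ r.2) : antiPart A p r ≤ 0 := by
  unfold antiPart
  rcases hp.eq_or_lt with hp | hp
  · rw [hp]; linarith
  rcases hr.eq_or_lt with hr | hr
  · rw [hr]; linarith
  linarith [hTN _ _ _ _ hp hr]

end Pairs

section Sums

variable {ι V : Type} (A : Matrix ι ι ℝ) (G : SimpleGraph V)

def swapBy (δ : V → Bool) (x : V → ι × ι) : V → ι × ι := fun v => condSwap (δ v) (x v)

lemma swapBy_involutive (δ : V → Bool) : Function.Involutive (swapBy (ι := ι) δ) :=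
  fun x => funext fun v => condSwap_condSwap (δ v) (x v)

/-- `(-1) ^ |t ∩ ∂S|` for the vertex set `S = {v | δ v}`. -/
noncomputable def cutSign (δ : V → Bool) (t : Finset (Sym2 V)) : ℝ :=
  ∏ e ∈ t, sgn (xor (δ (Quot.out e).1) (δ (Quot.out e).2))

variable [Fintype V]

noncomputable def edgeTerm (t : Finset (Sym2 V)) (x : V → ι × ι) : ℝ :=
  (∏ e ∈ t, antiPart A (x (Quot.out e).1) (x (Quot.out e).2)) *
    ∏ e ∈ G.edgeFinset \ t, symPart A (x (Quot.out e).1) (x (Quot.out e).2)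

lemma edgeTerm_swapBy (δ : V → Bool) (t : Finset (Sym2 V)) (x : V → ι × ι) :
    edgeTerm A G t (swapBy δ x) = cutSign δ t * edgeTerm A G t x := by
  simp only [edgeTerm, cutSign, swapBy, antiPart_condSwap, symPart_condSwap, prod_mul_distrib]
  ring

variable [Fintype ι]

/-- Summing over `x : V → ι × ι` is summing over pairs of maps `V → ι`, one for each sheet of a
2-lift; `c e` records whether the edge `e` lifts to the crossing pair. -/
noncomputable def liftSum (c : Sym2 V → Bool) : ℝ :=
  ∑ x : V → ι × ι, ∏ e ∈ G.edgeFinset,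
    pairWeight A (c e) (x (Quot.out e).1) (x (Quot.out e).2)

noncomputable def edgeCoeff (t : Finset (Sym2 V)) : ℝ :=
  ∑ x : V → ι × ι, edgeTerm A G t x

lemma liftSum_congr_switch (δ : V → Bool) {c c' : Sym2 V → Bool}
    (h : ∀ e ∈ G.edgeFinset, c' e = xor (c e) (xor (δ (Quot.out e).1) (δ (Quot.out e).2))) :
    liftSum A G c' = liftSum A G c := by
  refine Fintype.sum_equiv (Function.Involutive.toPerm _ (swapBy_involutive δ)) _ _
    fun x => prod_congr rfl fun e he => ?_
  simp only [Function.Involutive.coe_toPerm, swapBy, h e he, pairWeight_condSwap]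

lemma liftSum_eq_sum_powerset (c : Sym2 V → Bool) :
    liftSum A G c = ∑ t ∈ G.edgeFinset.powerset, (∏ e ∈ t, sgn (c e)) * edgeCoeff A G t := by
  simp only [liftSum, pairWeight_eq, prod_add, edgeCoeff, mul_sum]
  rw [sum_comm]
  refine sum_congr rfl fun t _ => sum_congr rfl fun x _ => ?_
  rw [edgeTerm, prod_mul_distrib, mul_assoc]

lemma edgeCoeff_eq_zero_of_cutSign_ne_one {δ : V → Bool} {t : Finset (Sym2 V)}
    (hδ : cutSign δ t ≠ 1) : edgeCoeff A G t = 0 := by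
  have h : edgeCoeff A G t = cutSign δ t * edgeCoeff A G t := by
    rw [edgeCoeff, mul_sum, ← Equiv.sum_comp (Function.Involutive.toPerm _ (swapBy_involutive δ))]
    exact sum_congr rfl fun x _ => edgeTerm_swapBy A G δ t x
  have : (1 - cutSign δ t) * edgeCoeff A G t = 0 := by linarith
  exact (mul_eq_zero.mp this).resolve_left (sub_ne_zero.mpr hδ.symm)

lemma neg_one_pow_card_mul_edgeCoeff_nonneg [LinearOrder ι] (hnn : ∀ i j, 0 ≤ A i j)
    (hTN : ∀ i j r s : ι, i < j → r < s → A i r * A j s - A i s * A j r ≤ 0)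
    (t : Finset (Sym2 V)) : 0 ≤ (-1) ^ t.card * edgeCoeff A G t := by
  by_cases hcut : ∀ δ : V → Bool, cutSign δ t = 1
  · rw [edgeCoeff, mul_sum]
    refine sum_nonneg fun x _ => ?_
    set y := swapBy (fun v => decide ((x v).2 < (x v).1)) x
    have hy : edgeTerm A G t x = edgeTerm A G t y := by
      rw [edgeTerm_swapBy, hcut, one_mul]
    have hsorted : ∀ v, (y v).1 ≤ (y v).2 := fun v => condSwap_sorted (x v)
    rw [hy, edgeTerm, ← mul_assoc, ← prod_neg]
    exact mul_nonneg (prod_nonneg fun e _ => neg_nonneg.mpr (antiPart_nonpos A hTN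
      (hsorted _) (hsorted _))) (prod_nonneg fun e _ => symPart_nonneg A hnn _ _)
  · obtain ⟨δ, hδ⟩ := not_forall.mp hcut
    rw [edgeCoeff_eq_zero_of_cutSign_ne_one A G hδ, mul_zero]

lemma liftSum_le_liftSum_true [LinearOrder ι] (hnn : ∀ i j, 0 ≤ A i j)
    (hTN : ∀ i j r s : ι, i < j → r < s → A i r * A j s - A i s * A j r ≤ 0)
    (c : Sym2 V → Bool) : liftSum A G c ≤ liftSum A G (fun _ => true) := by
  rw [liftSum_eq_sum_powerset, liftSum_eq_sum_powerset]
  refine sum_le_sum fun t _ => ?_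
  have hσ : |∏ e ∈ t, sgn (c e)| = 1 := by
    rw [abs_prod]
    exact prod_eq_one fun e _ => abs_sgn _
  calc (∏ e ∈ t, sgn (c e)) * edgeCoeff A G t
      ≤ |(∏ e ∈ t, sgn (c e)) * edgeCoeff A G t| := le_abs_self _
    _ = |(-1) ^ t.card * edgeCoeff A G t| := by rw [abs_mul, abs_mul, hσ, abs_neg_one_pow]
    _ = (∏ e ∈ t, sgn true) * edgeCoeff A G t := by
      rw [abs_of_nonneg (neg_one_pow_card_mul_edgeCoeff_nonneg A G hnn hTN t), prod_const, sgn,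
        if_pos rfl]

end Sums

section Lift

variable {V : Type}

lemma mk_out (e : Sym2 V) : s((Quot.out e).1, (Quot.out e).2) = e := Quot.out_eq e

lemma out_mk_eq_or (u v : V) : Quot.out s(u, v) = (u, v) ∨ Quot.out s(u, v) = (v, u) :=
  Sym2.mk_eq_mk_iff.mp (mk_out s(u, v))

lemma out_eq_lift {β : Type} (f : V → V → β) (hf : ∀ a b, f a b = f b a) (e : Sym2 V) :
    f (Quot.out e).1 (Quot.out e).2 = Sym2.lift ⟨f, hf⟩ e := by
  conv_rhs => rw [← mk_out e]
  rfl

lemma adj_out {G : SimpleGraph V} {e : Sym2 V} (he : e ∈ G.edgeSet) :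
    G.Adj (Quot.out e).1 (Quot.out e).2 := by
  rwa [← mk_out e] at he

noncomputable def liftEdge (s : V → V → Bool) (e : Sym2 V) (b : Bool) : Sym2 (V × Bool) :=
  s(((Quot.out e).1, b), ((Quot.out e).2, xor b (s (Quot.out e).1 (Quot.out e).2)))

variable (G : SimpleGraph V) (s : V → V → Bool) (hs : ∀ u v, s u v = s v u)

lemma map_fst_liftEdge (e : Sym2 V) (b : Bool) : Sym2.map Prod.fst (liftEdge s e b) = e := by
  rw [liftEdge, Sym2.map_mk]
  exact mk_out e

lemma liftEdge_mem_edgeSet {e : Sym2 V} (he : e ∈ G.edgeSet) (b : Bool) :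
    liftEdge s e b ∈ (twoLift G s hs).edgeSet :=
  ⟨adj_out he, by cases b <;> simp⟩

lemma liftEdge_injective {e : Sym2 V} (he : e ∈ G.edgeSet) : Function.Injective (liftEdge s e) := by
  intro b b' h
  rw [liftEdge, liftEdge, Sym2.eq_iff] at h
  rcases h with ⟨h, -⟩ | ⟨h, -⟩
  · exact congrArg Prod.snd h
  · exact absurd (congrArg Prod.fst h) (adj_out he).ne

lemma map_fst_mem_edgeSet {E : Sym2 (V × Bool)} (hE : E ∈ (twoLift G s hs).edgeSet) :
    Sym2.map Prod.fst E ∈ G.edgeSet := by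
  induction E using Sym2.ind with
  | h a a' => exact hE.1

lemma exists_liftEdge_eq {E : Sym2 (V × Bool)} (hE : E ∈ (twoLift G s hs).edgeSet) :
    ∃ b, liftEdge s (Sym2.map Prod.fst E) b = E := by
  induction E using Sym2.ind with
  | h a a' =>
    obtain ⟨u, c⟩ := a
    obtain ⟨v, d⟩ := a'
    obtain ⟨-, hcd⟩ : G.Adj u v ∧ xor c d = s u v := hE
    rw [Sym2.map_mk]
    rcases out_mk_eq_or u v with h | h
    · refine ⟨c, ?_⟩
      rw [liftEdge, h, ← hcd, ← Bool.xor_assoc, Bool.xor_self, Bool.false_xor]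
    · refine ⟨d, ?_⟩
      rw [liftEdge, h, hs, ← hcd, Sym2.eq_swap]
      cases c <;> cases d <;> rfl

lemma prod_edgeFinset_twoLift [Fintype V] {M : Type} [CommMonoid M] (f : Sym2 (V × Bool) → M) :
    ∏ E ∈ (twoLift G s hs).edgeFinset, f E = ∏ e ∈ G.edgeFinset, ∏ b, f (liftEdge s e b) := by
  rw [← prod_product' (f := fun e b => f (liftEdge s e b))]
  symm
  refine prod_bij (fun p _ => liftEdge s p.1 p.2) ?_ ?_ ?_ fun _ _ => rfl
  · rintro ⟨e, b⟩ he
    simp only [mem_product, SimpleGraph.mem_edgeFinset] at he ⊢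
    exact liftEdge_mem_edgeSet G s hs he.1 b
  · rintro ⟨e, b⟩ he ⟨e', b'⟩ - h
    obtain rfl : e = e' := by
      simpa only [map_fst_liftEdge] using congrArg (Sym2.map Prod.fst) h
    simp only [mem_product, SimpleGraph.mem_edgeFinset] at he
    exact congrArg _ (liftEdge_injective G s he.1 h)
  · intro E hE
    rw [SimpleGraph.mem_edgeFinset] at hE
    obtain ⟨b, hb⟩ := exists_liftEdge_eq G s hs hE
    refine ⟨(Sym2.map Prod.fst E, b), ?_, hb⟩
    simpa only [mem_product, SimpleGraph.mem_edgeFinset, mem_univ, and_true]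
      using map_fst_mem_edgeSet G s hs hE

end Lift

section PartitionFunction

variable {ι V : Type} [Fintype ι] [Fintype V] (A : Matrix ι ι ℝ) (G : SimpleGraph V)

theorem sq_Z_eq_liftSum_false : Z G A ^ 2 = liftSum A G (fun _ => false) := by
  rw [sq, Z, sum_mul_sum, ← Fintype.sum_prod_type' (γ := ℝ)]
  refine (Fintype.sum_equiv (Equiv.arrowProdEquivProdArrow _ _ _) _ _ fun x => ?_).symm
  simp [pairWeight, prod_mul_distrib]

theorem Z_twoLift_eq_liftSum (hA : A.IsSymm) (s : V → V → Bool) (hs : ∀ u v, s u v = s v u) :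
    Z (twoLift G s hs) A = liftSum A G (fun e => s (Quot.out e).1 (Quot.out e).2) := by
  let sheets : (V × Bool → ι) ≃ (V → ι × ι) := (Equiv.curry V Bool ι).trans
    (Equiv.arrowCongr (Equiv.refl V) (Equiv.boolArrowEquivProd ι))
  rw [Z, liftSum]
  refine Finset.sum_equiv sheets (by simp) fun φ _ => ?_
  have hφ : ∀ a b, A (φ a) (φ b) = A (φ b) (φ a) := fun a b => hA.apply _ _
  rw [prod_congr rfl fun E _ => out_eq_lift _ hφ E, prod_edgeFinset_twoLift]
  refine prod_congr rfl fun e _ => ?_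
  cases h : s (Quot.out e).1 (Quot.out e).2 <;> simp [liftEdge, pairWeight, sheets, h] <;> ring

theorem Z_twoLift_le_Z_doubleCover [LinearOrder ι] (hnn : ∀ i j, 0 ≤ A i j) (hA : A.IsSymm)
    (hTN : ∀ i j r s : ι, i < j → r < s → A i r * A j s - A i s * A j r ≤ 0)
    (s : V → V → Bool) (hs : ∀ u v, s u v = s v u) :
    Z (twoLift G s hs) A ≤ Z (doubleCover G) A := by
  rw [doubleCover, Z_twoLift_eq_liftSum A G hA, Z_twoLift_eq_liftSum A G hA]
  exact liftSum_le_liftSum_true A G hnn hTN _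

theorem Z_doubleCover_eq_sq (hA : A.IsSymm) (hG : G.Colorable 2) :
    Z (doubleCover G) A = Z G A ^ 2 := by
  obtain ⟨C⟩ := hG
  rw [doubleCover, Z_twoLift_eq_liftSum A G hA, sq_Z_eq_liftSum_false]
  refine liftSum_congr_switch A G (finTwoEquiv ∘ C) fun e he => ?_
  rw [Bool.false_xor, eq_comm, Bool.xor_iff_ne]
  exact finTwoEquiv.injective.ne (C.valid (adj_out (SimpleGraph.mem_edgeFinset.mp he)))

end PartitionFunction

end TwoLift

theorem TN2_two_lift_bipartite {q : ℕ} (A : Matrix (Fin q) (Fin q) ℝ)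
    (hnn : ∀ i j, 0 ≤ A i j) (hsymm : A.IsSymm)
    (hTN : ∀ i j r s : Fin q, i < j → r < s → A i r * A j s - A i s * A j r ≤ 0)
    {V : Type} [Fintype V] (G : SimpleGraph V) (hbip : G.Colorable 2)
    (s : V → V → Bool) (hs : ∀ u v, s u v = s v u) :
    Z (twoLift G s hs) A ≤ (Z G A) ^ 2 :=
  calc Z (twoLift G s hs) A ≤ Z (doubleCover G) A :=
        TwoLift.Z_twoLift_le_Z_doubleCover A G hnn hsymm hTN s hs
    _ = Z G A ^ 2 := TwoLift.Z_doubleCover_eq_sq A G hsymm hbip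
end
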